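/- arXiv:1201.5432 — 10 statements merged into one kernel-verified Lean document; each statement's English description precedes it below -/
import Mathlib

section
/- Let λ > 0, α ∈ (0, 1/(1+λ)], and z ∈ (0,1). Then 2(1-αz)(1-α) - λα(1-z) ≥ λ(1-αz+λαz)/(1+λ) ≥ λ²αz/(1+λ) > 0. -/
theorem stmt_2 (lam α z : ℝ) (hlam : 0 < lam)
    (hα : α ∈ Set.Ioc 0 (1 / (1 + lam))) (hz : z ∈ Set.Ioo 0 1) :
    2 * (1 - α * z) * (1 - α) - lam * α * (1 - z) ≥
        lam * (1 - α * z + lam * α * z) / (1 + lam) ∧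
    lam * (1 - α * z + lam * α * z) / (1 + lam) ≥ lam ^ 2 * α * z / (1 + lam) ∧
    lam ^ 2 * α * z / (1 + lam) > 0 := by
  obtain ⟨hα0, hα1⟩ := hα
  obtain ⟨hz0, hz1⟩ := hz
  have h1 : 0 < 1 + lam := by linarith
  have hαb : α * (1 + lam) ≤ 1 := by
    rw [le_div_iff₀ h1] at hα1; linarith
  have haz : α * z < 1 := by nlinarith
  refine ⟨?_, ?_, ?_⟩
  · rw [ge_iff_le, div_le_iff₀ h1]
    nlinarith [mul_pos hα0 hz0, sq_nonneg (1 - α * (1 + lam)), mul_nonneg (mul_nonneg hα0.le hz0.le) (sub_nonneg.2 hαb), mul_nonneg (sub_nonneg.2 hαb) (sub_nonneg.2 hz1.le)]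
  · rw [ge_iff_le, div_le_div_iff₀ h1 h1]
    nlinarith [mul_pos hlam h1, mul_pos (mul_pos hlam hlam) h1]
  · positivity
end

section
/- Define T(α;λ) = √(α/λ) ∫₀¹ ((1-αz)(1-α) - λα(1-z)) / (√(1-z)·√(2(1-αz)(1-α) - λα(1-z))) dz for λ > 0 and α ∈ (0, 1/(1+λ)]. Then 0 < T(α;λ) ≤ (√(1+λ)/λ)·log((1+√α)/(1-√α)); in particular the integral converges. -/
/-!
Write the integrand as `g z / √(1 - z)` with `g = N / √D`, where `N` is the numerator and `D` the
radicand. The identity `N = (1 - z)(1 - α(1 + λ)) + z(1 - α)²` shows `0 ≤ N` on `[0, 1]`, with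
`N > 0` inside, precisely because `α ≤ 1 / (1 + λ)`. Since moreover `N ≤ 1` and `N ≤ D`, we get
`N² ≤ D`, i.e. `g ≤ 1`, so the integral is at most `∫₀¹ (1 - z)^(-1/2) dz = 2`. Finally
`√(α/λ) ≤ √α √(1 + λ) / λ` and `2x ≤ log((1 + x)/(1 - x))`, the first term of the series of
`2 artanh x`.
-/

open MeasureTheory Set intervalIntegral

lemma Real.two_mul_le_log_one_add_div_one_sub {x : ℝ} (hx0 : 0 ≤ x) (hx1 : x < 1) :
    2 * x ≤ Real.log ((1 + x) / (1 - x)) := by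
  have hs := Real.hasSum_log_sub_log_of_abs_lt_one (abs_lt.mpr ⟨by linarith, hx1⟩)
  rw [Real.log_div (by linarith) (by linarith)]
  simpa using le_hasSum hs 0 fun k _ => by positivity

lemma Real.sqrt_div_le_sqrt_mul_sqrt_one_add_div {α lam : ℝ} (hlam : 0 < lam) :
    √(α / lam) ≤ √α * √(1 + lam) / lam := by
  calc √(α / lam) = √α * √lam / lam := by
        rw [Real.sqrt_div' _ hlam.le, div_eq_div_iff (Real.sqrt_pos.mpr hlam).ne' hlam.ne',
          mul_assoc, Real.mul_self_sqrt hlam.le]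
    _ ≤ √α * √(1 + lam) / lam := by gcongr; linarith

lemma div_sqrt_le_one {n d : ℝ} (hn0 : 0 ≤ n) (hn1 : n ≤ 1) (hnd : n ≤ d) : n / √d ≤ 1 := by
  rcases (Real.sqrt_nonneg d).eq_or_lt with hd | hd
  · simp [← hd]
  rw [div_le_one hd, Real.le_sqrt hn0 (by linarith)]
  nlinarith

lemma intervalIntegrable_inv_sqrt_one_sub :
    IntervalIntegrable (fun z : ℝ => (√(1 - z))⁻¹) volume 0 1 := by
  have h : IntervalIntegrable (fun z : ℝ => (√z)⁻¹) volume 0 1 := by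
    refine IntervalIntegrable.congr (fun z hz => ?_)
      (intervalIntegrable_rpow' (r := -(1 / 2)) (by norm_num))
    rw [uIoc_of_le zero_le_one] at hz
    simp [Real.sqrt_eq_rpow, Real.rpow_neg hz.1.le]
  simpa using (h.comp_sub_left 1).symm

lemma integral_inv_sqrt_one_sub : ∫ z in (0 : ℝ)..1, (√(1 - z))⁻¹ = 2 := by
  rw [integral_comp_sub_left (fun z => (√z)⁻¹), sub_self, sub_zero,
    integral_congr (g := fun z : ℝ => z ^ (-(1 / 2) : ℝ)), integral_rpow (Or.inl (by norm_num))]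
  · norm_num
  intro z hz
  rw [uIcc_of_le zero_le_one] at hz
  simp [Real.sqrt_eq_rpow, Real.rpow_neg hz.1]

lemma intervalIntegrable_div_sqrt_one_sub {g : ℝ → ℝ} (hg : ContinuousOn g (Icc 0 1)) :
    IntervalIntegrable (fun z => g z / √(1 - z)) volume 0 1 := by
  simp_rw [div_eq_mul_inv]
  exact intervalIntegrable_inv_sqrt_one_sub.continuousOn_mul (by rwa [uIcc_of_le zero_le_one])

lemma integral_div_sqrt_one_sub_le {g : ℝ → ℝ} (hg : ContinuousOn g (Icc 0 1)) {c : ℝ}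
    (hgc : ∀ z ∈ Icc (0 : ℝ) 1, g z ≤ c) :
    ∫ z in (0 : ℝ)..1, g z / √(1 - z) ≤ 2 * c := by
  calc ∫ z in (0 : ℝ)..1, g z / √(1 - z)
      ≤ ∫ z in (0 : ℝ)..1, c * (√(1 - z))⁻¹ :=
        integral_mono_on zero_le_one (intervalIntegrable_div_sqrt_one_sub hg)
          (intervalIntegrable_inv_sqrt_one_sub.const_mul c) fun z hz => by
            rw [div_eq_mul_inv]; gcongr; exact hgc z hz
    _ = 2 * c := by rw [intervalIntegral.integral_const_mul, integral_inv_sqrt_one_sub, mul_comm]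

namespace TimeMap

def numerator (lam α z : ℝ) : ℝ := (1 - α * z) * (1 - α) - lam * α * (1 - z)

def radicand (lam α z : ℝ) : ℝ := 2 * (1 - α * z) * (1 - α) - lam * α * (1 - z)

variable {lam α z : ℝ}

lemma numerator_eq :
    numerator lam α z = (1 - z) * (1 - α * (1 + lam)) + z * (1 - α) ^ 2 := by
  unfold numerator; ring

lemma numerator_nonneg (hαlam : α * (1 + lam) ≤ 1) (hz : z ∈ Icc (0 : ℝ) 1) :
    0 ≤ numerator lam α z := by
  have : 0 ≤ 1 - z := by linarith [hz.2]
  rw [numerator_eq]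
  nlinarith [hz.1, sq_nonneg (1 - α)]

lemma numerator_pos (hαlam : α * (1 + lam) ≤ 1) (hα1 : α < 1) (hz : z ∈ Ioo (0 : ℝ) 1) :
    0 < numerator lam α z := by
  have : 0 ≤ 1 - z := by linarith [hz.2]
  rw [numerator_eq]
  nlinarith [mul_pos hz.1 (pow_pos (sub_pos.mpr hα1) 2)]

lemma numerator_le_one (hlam : 0 ≤ lam) (hα0 : 0 ≤ α) (hα1 : α ≤ 1) (hz : z ∈ Icc (0 : ℝ) 1) :
    numerator lam α z ≤ 1 := by
  have h1 : 0 ≤ lam * α * (1 - z) := mul_nonneg (mul_nonneg hlam hα0) (by linarith [hz.2])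
  have h2 : (1 - α * z) * (1 - α) ≤ 1 :=
    mul_le_one₀ (by linarith [mul_nonneg hα0 hz.1]) (by linarith) (by linarith)
  unfold numerator; linarith

lemma numerator_lt_radicand (hα0 : 0 ≤ α) (hα1 : α < 1) (hz : z ∈ Icc (0 : ℝ) 1) :
    numerator lam α z < radicand lam α z := by
  have : α * z ≤ α := mul_le_of_le_one_right hα0 hz.2
  have : 0 < (1 - α * z) * (1 - α) := by apply mul_pos <;> linarith
  unfold numerator radicand; linarith

end TimeMap

open TimeMap

theorem stmt_5 (lam α : ℝ) (hlam : 0 < lam) (hα : α ∈ Set.Ioc 0 (1 / (1 + lam))) :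
    IntervalIntegrable
      (fun z => ((1 - α * z) * (1 - α) - lam * α * (1 - z)) /
        (Real.sqrt (1 - z) * Real.sqrt (2 * (1 - α * z) * (1 - α) - lam * α * (1 - z))))
      MeasureTheory.volume 0 1 ∧
    0 < Real.sqrt (α / lam) *
        ∫ z in (0:ℝ)..1, ((1 - α * z) * (1 - α) - lam * α * (1 - z)) /
          (Real.sqrt (1 - z) * Real.sqrt (2 * (1 - α * z) * (1 - α) - lam * α * (1 - z))) ∧
    Real.sqrt (α / lam) *
        (∫ z in (0:ℝ)..1, ((1 - α * z) * (1 - α) - lam * α * (1 - z)) /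
          (Real.sqrt (1 - z) * Real.sqrt (2 * (1 - α * z) * (1 - α) - lam * α * (1 - z)))) ≤
      (Real.sqrt (1 + lam) / lam) *
        Real.log ((1 + Real.sqrt α) / (1 - Real.sqrt α)) := by
  obtain ⟨hα0, hα⟩ := hα
  have hαlam : α * (1 + lam) ≤ 1 := (le_div_iff₀ (by linarith)).mp hα
  have hα1 : α < 1 := hα.trans_lt ((div_lt_one (by linarith)).mpr (by linarith))
  have hrad : ∀ z ∈ Icc (0 : ℝ) 1, 0 < radicand lam α z := fun z hz =>
    (numerator_nonneg hαlam hz).trans_lt (numerator_lt_radicand hα0.le hα1 hz)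
  have hg : ContinuousOn (fun z => numerator lam α z / √(radicand lam α z)) (Icc 0 1) :=
    ContinuousOn.div (by unfold numerator; fun_prop) (by unfold radicand; fun_prop) fun z hz =>
      (Real.sqrt_pos.mpr (hrad z hz)).ne'
  have hint : ∫ z in (0 : ℝ)..1, numerator lam α z / √(radicand lam α z) / √(1 - z) ≤ 2 := by
    simpa using integral_div_sqrt_one_sub_le hg fun z hz =>
      div_sqrt_le_one (numerator_nonneg hαlam hz) (numerator_le_one hlam.le hα0.le hα1.le hz)
        (numerator_lt_radicand hα0.le hα1 hz).le
  simp only [div_mul_eq_div_div_swap]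
  refine ⟨intervalIntegrable_div_sqrt_one_sub hg, ?_, ?_⟩
  · refine mul_pos (Real.sqrt_pos.mpr (div_pos hα0 hlam))
      (intervalIntegral_pos_of_pos_on (intervalIntegrable_div_sqrt_one_sub hg) (fun z hz => ?_)
        zero_lt_one)
    exact div_pos (div_pos (numerator_pos hαlam hα1 hz) (Real.sqrt_pos.mpr
      (hrad z (Ioo_subset_Icc_self hz)))) (Real.sqrt_pos.mpr (by linarith [hz.2]))
  · calc √(α / lam) * ∫ z in (0 : ℝ)..1, numerator lam α z / √(radicand lam α z) / √(1 - z)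
        ≤ √(α / lam) * 2 := by gcongr
      _ ≤ √α * √(1 + lam) / lam * 2 := by
        gcongr; exact Real.sqrt_div_le_sqrt_mul_sqrt_one_add_div hlam
      _ = √(1 + lam) / lam * (2 * √α) := by ring
      _ ≤ √(1 + lam) / lam * Real.log ((1 + √α) / (1 - √α)) := by
        gcongr; exact Real.two_mul_le_log_one_add_div_one_sub (Real.sqrt_nonneg α)
          ((Real.sqrt_lt' one_pos).mpr (by linarith))
end

section
/- For fixed λ > 0, the time map T(α;λ) = √(α/λ) ∫₀¹ ((1-αz)(1-α) - λα(1-z)) / (√(1-z)·√(2(1-αz)(1-α) - λα(1-z))) dz tends to 0 as α → 0⁺. -/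
/-! Write the integrand as `(a - b) / (√(1 - z) √(2a - b))` with `a = (1 - αz)(1 - α)` and
`b = λα(1 - z)`. For small `α` we have `a ∈ [1/4, 1]` and `b ∈ [0, 1/4]`, so the integrand is
bounded by `2 (1 - z)^(-1/2)`, which is integrable on `[0, 1]`. Hence the integral stays bounded
as `α → 0⁺`, while the prefactor `√(α/λ)` tends to `0`. -/

open Filter Set Real Topology

lemma abs_sub_div_sqrt_two_mul_sub_le {a b : ℝ} (ha₀ : 1 / 4 ≤ a) (ha₁ : a ≤ 1) (hb₀ : 0 ≤ b)
    (hb₁ : b ≤ 1 / 4) : |a - b| / √(2 * a - b) ≤ 2 := by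
  have hsqrt : 1 / 2 ≤ √(2 * a - b) := by
    rw [show (1 / 2 : ℝ) = √((1 / 2) ^ 2) by rw [sqrt_sq (by norm_num)]]
    exact sqrt_le_sqrt (by nlinarith)
  rw [div_le_iff₀ (by linarith)]
  calc |a - b| ≤ 1 := abs_le.mpr ⟨by linarith, by linarith⟩
    _ ≤ 2 * √(2 * a - b) := by linarith

lemma inv_sqrt_eq_rpow {x : ℝ} (hx : 0 ≤ x) : (√x)⁻¹ = x ^ (-(1 / 2) : ℝ) := by
  rw [rpow_neg hx, sqrt_eq_rpow]

lemma intervalIntegrable_one_sub_rpow_neg_half :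
    IntervalIntegrable (fun z : ℝ => (1 - z) ^ (-(1 / 2) : ℝ)) MeasureTheory.volume 0 1 := by
  simpa using ((intervalIntegral.intervalIntegrable_rpow' (a := 0) (b := 1)
    (r := -(1 / 2)) (by norm_num)).comp_sub_left 1).symm

lemma norm_timeMap_integrand_le {lam α z : ℝ} (hlam : 0 ≤ lam) (hα₀ : 0 ≤ α) (hα₁ : α ≤ 1 / 2)
    (hlamα : lam * α ≤ 1 / 4) (hz : z ∈ Icc (0 : ℝ) 1) :
    ‖((1 - α * z) * (1 - α) - lam * α * (1 - z)) /
        (√(1 - z) * √(2 * (1 - α * z) * (1 - α) - lam * α * (1 - z)))‖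
      ≤ 2 * (1 - z) ^ (-(1 / 2) : ℝ) := by
  obtain ⟨hz₀, hz₁⟩ := hz
  have hαz : α * z ≤ α := mul_le_of_le_one_right hα₀ hz₁
  have hb₀ : 0 ≤ lam * α * (1 - z) := by have := mul_nonneg hlam hα₀; positivity
  have hb₁ : lam * α * (1 - z) ≤ 1 / 4 := by nlinarith [mul_nonneg hlam hα₀]
  have ha₀ : 1 / 4 ≤ (1 - α * z) * (1 - α) := by nlinarith [mul_nonneg hα₀ hz₀]
  have ha₁ : (1 - α * z) * (1 - α) ≤ 1 := by nlinarith [mul_nonneg hα₀ hz₀]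
  rw [← inv_sqrt_eq_rpow (by linarith), norm_div, norm_mul, Real.norm_eq_abs, Real.norm_eq_abs,
    Real.norm_eq_abs, abs_of_nonneg (sqrt_nonneg _), abs_of_nonneg (sqrt_nonneg _),
    div_mul_eq_div_div_swap, div_eq_mul_inv _ (√(1 - z))]
  have hbound := abs_sub_div_sqrt_two_mul_sub_le ha₀ ha₁ hb₀ hb₁
  rw [← mul_assoc] at hbound
  exact mul_le_mul_of_nonneg_right hbound (by positivity)

lemma norm_timeMap_integral_le {lam α : ℝ} (hlam : 0 ≤ lam) (hα₀ : 0 ≤ α) (hα₁ : α ≤ 1 / 2)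
    (hlamα : lam * α ≤ 1 / 4) :
    ‖∫ z in (0 : ℝ)..1, ((1 - α * z) * (1 - α) - lam * α * (1 - z)) /
        (√(1 - z) * √(2 * (1 - α * z) * (1 - α) - lam * α * (1 - z)))‖
      ≤ ∫ z in (0 : ℝ)..1, 2 * (1 - z) ^ (-(1 / 2) : ℝ) :=
  intervalIntegral.norm_integral_le_of_norm_le zero_le_one
    (.of_forall fun _ hz => norm_timeMap_integrand_le hlam hα₀ hα₁ hlamα (Ioc_subset_Icc_self hz))
    (intervalIntegrable_one_sub_rpow_neg_half.const_mul 2)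

theorem stmt_6 (lam : ℝ) (hlam : 0 < lam) :
    Filter.Tendsto
      (fun α : ℝ => Real.sqrt (α / lam) *
        ∫ z in (0:ℝ)..1, ((1 - α * z) * (1 - α) - lam * α * (1 - z)) /
          (Real.sqrt (1 - z) * Real.sqrt (2 * (1 - α * z) * (1 - α) - lam * α * (1 - z))))
      (nhdsWithin 0 (Set.Ioi 0)) (nhds 0) := by
  have hsmall : ∀ᶠ α in 𝓝[>] 0, 0 ≤ α ∧ α ≤ 1 / 2 ∧ lam * α ≤ 1 / 4 := by
    have hδ : 0 < min (1 / 2) (1 / (4 * lam)) := by positivity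
    filter_upwards [Ioo_mem_nhdsGT hδ] with α ⟨hα₀, hα⟩
    have hαlam : α ≤ 1 / (4 * lam) := (hα.trans_le (min_le_right _ _)).le
    rw [le_div_iff₀ (by positivity)] at hαlam
    exact ⟨hα₀.le, (hα.trans_le (min_le_left _ _)).le, by linarith⟩
  have hprefactor : Tendsto (fun α : ℝ => √(α / lam)) (𝓝[>] 0) (𝓝 0) := by
    simpa using ((continuous_id.div_const lam).sqrt.tendsto 0).mono_left nhdsWithin_le_nhds
  exact hprefactor.zero_mul_isBoundedUnder_le <| isBoundedUnder_of_eventually_le <|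
    hsmall.mono fun α ⟨hα₀, hα₁, hlamα⟩ => norm_timeMap_integral_le hlam.le hα₀ hα₁ hlamα
end

section
/- For each fixed z ∈ (0,1) and α ∈ (0, 1/(1+λ)], the kernel K(α,z;λ) = √(α/λ)·((1-αz)(1-α)-λα(1-z))/(√(1-z)·√(2(1-αz)(1-α)-λα(1-z))) is strictly decreasing as a function of λ > 0 (on the range of λ for which α ≤ 1/(1+λ)). -/
lemma stmt_7_aux (N1 N2 A : ℝ) (h2 : 0 < N2) (h12 : N2 ≤ N1) (hA : 0 ≤ A) :
    N2 ^ 2 * (N1 + A) ≤ N1 ^ 2 * (N2 + A) := by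
  nlinarith [mul_nonneg (sub_nonneg.2 h12) (mul_pos (h2.trans_le h12) h2).le,
    mul_nonneg hA (mul_nonneg (sub_nonneg.2 h12) (by linarith : (0:ℝ) ≤ N1 + N2))]

theorem stmt_7 (α z : ℝ) (hz : z ∈ Set.Ioo 0 1) (hα : 0 < α) :
    StrictAntiOn
      (fun lam : ℝ => Real.sqrt (α / lam) *
        (((1 - α * z) * (1 - α) - lam * α * (1 - z)) /
          (Real.sqrt (1 - z) * Real.sqrt (2 * (1 - α * z) * (1 - α) - lam * α * (1 - z)))))
      {lam : ℝ | 0 < lam ∧ α ≤ 1 / (1 + lam)} := by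
  obtain ⟨hz0, hz1⟩ := hz
  rintro l1 ⟨hl1, ha1⟩ l2 ⟨hl2, ha2⟩ h12
  simp only
  have h1p : (0:ℝ) < 1 + l1 := by linarith
  have h2p : (0:ℝ) < 1 + l2 := by linarith
  have hA2 : α * (1 + l2) ≤ 1 := by
    rw [le_div_iff₀ h2p] at ha2; linarith
  have hα1 : α < 1 := by nlinarith
  have hAzlt : α * z < 1 := by nlinarith
  have hAz : 0 < (1 - α * z) * (1 - α) := mul_pos (by linarith) (by linarith)
  have hl2α : l2 * α ≤ 1 - α := by nlinarith
  have hl2b : l2 * α * (1 - z) ≤ (1 - α) * (1 - z) :=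
    mul_le_mul_of_nonneg_right hl2α (by linarith)
  have hfac : (1 - α * z) * (1 - α) - (1 - α) * (1 - z) = (1 - α) ^ 2 * z := by ring
  have hsqz : 0 < (1 - α) ^ 2 * z := mul_pos (pow_pos (by linarith) 2) hz0
  have hN2pos : 0 < (1 - α * z) * (1 - α) - l2 * α * (1 - z) := by linarith
  have hN12 : (1 - α * z) * (1 - α) - l2 * α * (1 - z)
      ≤ (1 - α * z) * (1 - α) - l1 * α * (1 - z) := by
    nlinarith [mul_nonneg (mul_nonneg (by linarith : (0:ℝ) ≤ l2 - l1) hα.le)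
      (by linarith : (0:ℝ) ≤ 1 - z)]
  set N1 : ℝ := (1 - α * z) * (1 - α) - l1 * α * (1 - z) with hN1
  set N2 : ℝ := (1 - α * z) * (1 - α) - l2 * α * (1 - z) with hN2
  have hN1pos : 0 < N1 := lt_of_lt_of_le hN2pos hN12
  have hD1 : 2 * (1 - α * z) * (1 - α) - l1 * α * (1 - z) = N1 + (1 - α * z) * (1 - α) := by
    rw [hN1]; ring
  have hD2 : 2 * (1 - α * z) * (1 - α) - l2 * α * (1 - z) = N2 + (1 - α * z) * (1 - α) := by
    rw [hN2]; ring
  have hD1pos : 0 < N1 + (1 - α * z) * (1 - α) := by linarith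
  have hD2pos : 0 < N2 + (1 - α * z) * (1 - α) := by linarith
  rw [hD1, hD2]
  have hs1 : 0 < Real.sqrt (N1 + (1 - α * z) * (1 - α)) := Real.sqrt_pos.mpr hD1pos
  have hs2 : 0 < Real.sqrt (N2 + (1 - α * z) * (1 - α)) := Real.sqrt_pos.mpr hD2pos
  have hsz : 0 < Real.sqrt (1 - z) := Real.sqrt_pos.mpr (by linarith)
  have ha : Real.sqrt (α / l2) < Real.sqrt (α / l1) := by
    apply Real.sqrt_lt_sqrt (div_nonneg hα.le hl2.le)
    exact div_lt_div_of_pos_left hα hl1 h12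
  have hb : N2 / (Real.sqrt (1 - z) * Real.sqrt (N2 + (1 - α * z) * (1 - α)))
      ≤ N1 / (Real.sqrt (1 - z) * Real.sqrt (N1 + (1 - α * z) * (1 - α))) := by
    rw [div_le_div_iff₀ (mul_pos hsz hs2) (mul_pos hsz hs1)]
    have key : N2 * Real.sqrt (N1 + (1 - α * z) * (1 - α))
        ≤ N1 * Real.sqrt (N2 + (1 - α * z) * (1 - α)) := by
      have e1 : N2 * Real.sqrt (N1 + (1 - α * z) * (1 - α))
          = Real.sqrt (N2 ^ 2 * (N1 + (1 - α * z) * (1 - α))) := by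
        rw [Real.sqrt_mul (by positivity), Real.sqrt_sq hN2pos.le]
      have e2 : N1 * Real.sqrt (N2 + (1 - α * z) * (1 - α))
          = Real.sqrt (N1 ^ 2 * (N2 + (1 - α * z) * (1 - α))) := by
        rw [Real.sqrt_mul (by positivity), Real.sqrt_sq hN1pos.le]
      rw [e1, e2]
      exact Real.sqrt_le_sqrt (stmt_7_aux N1 N2 _ hN2pos hN12 hAz.le)
    calc N2 * (Real.sqrt (1 - z) * Real.sqrt (N1 + (1 - α * z) * (1 - α)))
        = Real.sqrt (1 - z) * (N2 * Real.sqrt (N1 + (1 - α * z) * (1 - α))) := by ring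
      _ ≤ Real.sqrt (1 - z) * (N1 * Real.sqrt (N2 + (1 - α * z) * (1 - α))) :=
          mul_le_mul_of_nonneg_left key hsz.le
      _ = N1 * (Real.sqrt (1 - z) * Real.sqrt (N2 + (1 - α * z) * (1 - α))) := by ring
  have hb2pos : 0 < N2 / (Real.sqrt (1 - z) * Real.sqrt (N2 + (1 - α * z) * (1 - α))) :=
    div_pos hN2pos (mul_pos hsz hs2)
  exact mul_lt_mul ha hb hb2pos (Real.sqrt_nonneg _)
end

section
/- For λ > 1, (λ/(1+λ)^{3/2}) ∫₀¹ z/(√(1-z)·√(1-z+λ(1+z))) dz = (λ/(λ²-1)^{3/2})·( √(λ²-1) - arcsec(λ) ). -/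
/-!
Write `a = λ - 1`, `b = 1 + λ`, so that the radicand `1 - z + λ (1 + z)` is `b + a z`. The integrand
`z / (√(1 - z) √(b + a z))` has the elementary primitive
`(b - a) / a^{3/2} · arcsin √(a (1 - z) / (a + b)) - √(1 - z) √(b + a z) / a`, which vanishes at
`z = 1`; since the integrand is nonnegative, the primitive also gives its (improper) integrability.
At `z = 0` the arcsine is `arcsin √((1 - 1/λ) / 2)`, half of `arccos (1/λ)` by the half-angle
formula, and what remains is algebra with `(λ² - 1)^{3/2} = (λ - 1)^{3/2} (1 + λ)^{3/2}`.
-/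

open Real Set MeasureTheory intervalIntegral

lemma rpow_three_halves {x : ℝ} (hx : 0 ≤ x) : x ^ ((3:ℝ) / 2) = x * √x := by
  rw [show (3:ℝ) / 2 = 1 + 1 / 2 by norm_num, rpow_add' hx (by norm_num), rpow_one,
    ← sqrt_eq_rpow]

lemma arccos_eq_two_mul_arcsin_sqrt {c : ℝ} (hc₁ : -1 ≤ c) (hc₂ : c ≤ 1) :
    arccos c = 2 * arcsin √((1 - c) / 2) := by
  set θ := arcsin √((1 - c) / 2)
  have hsin : sin θ = √((1 - c) / 2) :=
    sin_arcsin (by linarith [sqrt_nonneg ((1 - c) / 2)]) (sqrt_le_one.mpr (by linarith))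
  have hcos : cos (2 * θ) = c := by
    rw [cos_two_mul, cos_sq', hsin, sq_sqrt (by linarith)]
    ring
  rw [← hcos, arccos_cos (by linarith [arcsin_nonneg.mpr (sqrt_nonneg ((1 - c) / 2))])
    (by linarith [arcsin_le_pi_div_two √((1 - c) / 2)])]

namespace TimeMap

variable {a b z : ℝ}

lemma hasDerivAt_sqrt_one_sub_mul_sqrt (h₁ : 0 < 1 - z) (h₂ : 0 < b + a * z) :
    HasDerivAt (fun x => √(1 - x) * √(b + a * x))
      ((a * (1 - z) - (b + a * z)) / (2 * (√(1 - z) * √(b + a * z)))) z := by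
  have hu := ((hasDerivAt_id' z).const_sub 1).sqrt h₁.ne'
  have hv := (((hasDerivAt_id' z).const_mul a).const_add b).sqrt h₂.ne'
  refine (hu.mul hv).congr_deriv ?_
  have := sqrt_pos.mpr h₁
  have := sqrt_pos.mpr h₂
  field_simp
  rw [mul_comm z a, sq_sqrt h₁.le, sq_sqrt h₂.le]
  ring

lemma hasDerivAt_arcsin_sqrt (ha : 0 < a) (h₁ : 0 < 1 - z) (h₂ : 0 < b + a * z) :
    HasDerivAt (fun x => arcsin √(a * (1 - x) / (a + b)))
      (-√a / (2 * (√(1 - z) * √(b + a * z)))) z := by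
  have hab : 0 < a + b := by nlinarith
  have hpos : 0 < a * (1 - z) / (a + b) := by positivity
  have hlt : a * (1 - z) / (a + b) < 1 := by rw [div_lt_one hab]; nlinarith
  have hs := (((hasDerivAt_id' z).const_sub 1).const_mul a).div_const (a + b) |>.sqrt hpos.ne'
  have hne₁ : √(a * (1 - z) / (a + b)) ≠ -1 := by linarith [sqrt_nonneg (a * (1 - z) / (a + b))]
  have hne₂ : √(a * (1 - z) / (a + b)) ≠ 1 := sqrt_eq_one.not.mpr hlt.ne
  refine ((hasDerivAt_arcsin hne₁ hne₂).comp z hs).congr_deriv ?_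
  have hcompl : 1 - a * (1 - z) / (a + b) = (b + a * z) / (a + b) := by field_simp; ring
  rw [sq_sqrt hpos.le, hcompl, sqrt_div h₂.le, sqrt_div' _ hab.le, sqrt_mul ha.le]
  have := sqrt_pos.mpr ha
  have := sqrt_pos.mpr h₁
  have := sqrt_pos.mpr h₂
  have := sqrt_pos.mpr hab
  field_simp
  rw [sq_sqrt ha.le, sq_sqrt hab.le]
  ring

noncomputable def primitive (a b z : ℝ) : ℝ :=
  (b - a) / (a * √a) * arcsin √(a * (1 - z) / (a + b)) - √(1 - z) * √(b + a * z) / a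

lemma hasDerivAt_primitive (ha : 0 < a) (h₁ : 0 < 1 - z) (h₂ : 0 < b + a * z) :
    HasDerivAt (primitive a b) (z / (√(1 - z) * √(b + a * z))) z := by
  refine (((hasDerivAt_arcsin_sqrt ha h₁ h₂).const_mul ((b - a) / (a * √a))).sub
    ((hasDerivAt_sqrt_one_sub_mul_sqrt h₁ h₂).div_const a)).congr_deriv ?_
  have := sqrt_pos.mpr ha
  have := sqrt_pos.mpr h₁
  have := sqrt_pos.mpr h₂
  field_simp
  ring

lemma continuous_primitive : Continuous (primitive a b) := by
  unfold primitive
  fun_prop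

theorem integral_div_sqrt_mul_sqrt (ha : 0 < a) (hb : 0 < b) :
    ∫ z in (0:ℝ)..1, z / (√(1 - z) * √(b + a * z)) =
      √b / a - (b - a) / (a * √a) * arcsin √(a / (a + b)) := by
  have hderiv : ∀ x ∈ Ioo (0:ℝ) 1,
      HasDerivAt (primitive a b) (x / (√(1 - x) * √(b + a * x))) x :=
    fun x hx => hasDerivAt_primitive ha (by linarith [hx.2]) (by nlinarith [hx.1])
  have hint : IntervalIntegrable (fun x => x / (√(1 - x) * √(b + a * x))) volume 0 1 :=
    intervalIntegrable_deriv_of_nonneg continuous_primitive.continuousOn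
      (by simpa using hderiv) fun x hx => div_nonneg (by simpa using hx.1.le) (by positivity)
  rw [integral_eq_sub_of_hasDerivAt_of_le zero_le_one continuous_primitive.continuousOn
    hderiv hint]
  simp [primitive]

end TimeMap

theorem stmt_10 (lam : ℝ) (hlam : 1 < lam) :
    (lam / (1 + lam) ^ ((3:ℝ)/2)) *
        ∫ z in (0:ℝ)..1, z / (Real.sqrt (1 - z) * Real.sqrt (1 - z + lam * (1 + z))) =
      (lam / (lam ^ 2 - 1) ^ ((3:ℝ)/2)) *
        (Real.sqrt (lam ^ 2 - 1) - Real.arccos (1 / lam)) := by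
  have hl : 0 < lam := by linarith
  have ha : 0 < lam - 1 := by linarith
  have hb : 0 < 1 + lam := by linarith
  have hlin : ∀ z : ℝ, 1 - z + lam * (1 + z) = 1 + lam + (lam - 1) * z := fun z => by ring
  have harccos : arccos (1 / lam) = 2 * arcsin √((lam - 1) / (lam - 1 + (1 + lam))) := by
    rw [arccos_eq_two_mul_arcsin_sqrt (by linarith [one_div_pos.mpr hl])
      ((div_le_one hl).mpr hlam.le)]
    congr 3
    field_simp
    ring
  have hfactor : lam ^ 2 - 1 = (lam - 1) * (1 + lam) := by ring
  simp only [hlin]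
  rw [TimeMap.integral_div_sqrt_mul_sqrt ha hb, harccos, rpow_three_halves hb.le,
    hfactor, rpow_three_halves (mul_pos ha hb).le, sqrt_mul ha.le]
  have := sqrt_pos.mpr ha
  have := sqrt_pos.mpr hb
  field_simp
  ring
end

section
/- Define g(λ) = (λ/(1+λ)^{3/2}) ∫₀¹ z/(√(1-z)·√(1-z+λ(1+z))) dz for λ > 0. Then 0 < g(λ) ≤ 2λ/((1+λ)^{3/2}·√(min{1+λ, 2λ})); consequently g(λ) → 0 as λ → 0⁺ and g(λ) → 0 as λ → +∞. -/
open MeasureTheory intervalIntegral Set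

namespace Stmt12Aux

noncomputable def Iq (lam : ℝ) : ℝ :=
  ∫ z in (0:ℝ)..1, z / (Real.sqrt (1 - z) * Real.sqrt (1 - z + lam * (1 + z)))

lemma q_ge {lam z : ℝ} (h0 : 0 ≤ z) (h1 : z ≤ 1) :
    min (1 + lam) (2 * lam) ≤ 1 - z + lam * (1 + z) := by
  rcases le_total (1 + lam) (2 * lam) with h | h
  · rw [min_eq_left h]; nlinarith
  · rw [min_eq_right h]; nlinarith

lemma majorant_int (c : ℝ) :
    IntervalIntegrable (fun z : ℝ => c * (1 - z) ^ (-(1/2) : ℝ)) volume 0 1 := by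
  have h := ((intervalIntegrable_rpow' (a := 0) (b := 1) (r := -(1/2))
    (by norm_num)).comp_sub_left 1).symm
  simpa using h.const_mul c

lemma majorant_val (c : ℝ) :
    ∫ z in (0:ℝ)..1, c * (1 - z) ^ (-(1/2) : ℝ) = c * 2 := by
  rw [intervalIntegral.integral_const_mul]
  have h := intervalIntegral.integral_comp_sub_left
    (a := (0:ℝ)) (b := 1) (fun x : ℝ => x ^ (-(1/2) : ℝ)) 1
  simp only [sub_zero, sub_self] at h
  rw [h, integral_rpow (Or.inl (by norm_num))]
  norm_num

lemma pointwise_le {lam : ℝ} (hl : 0 < lam) {z : ℝ} (h0 : 0 ≤ z) (h1 : z ≤ 1) :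
    z / (Real.sqrt (1 - z) * Real.sqrt (1 - z + lam * (1 + z))) ≤
      (Real.sqrt (min (1 + lam) (2 * lam)))⁻¹ * (1 - z) ^ (-(1/2) : ℝ) := by
  set m := min (1 + lam) (2 * lam) with hmdef
  have hm : 0 < m := lt_min (by linarith) (by linarith)
  rcases eq_or_lt_of_le h1 with rfl | h1'
  · simp
  · have h1z : 0 < 1 - z := by linarith
    have hq : 0 < 1 - z + lam * (1 + z) := by nlinarith
    have hs1 : 0 < Real.sqrt (1 - z) := Real.sqrt_pos.2 h1z
    have hsm : 0 < Real.sqrt m := Real.sqrt_pos.2 hm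
    have hsq : Real.sqrt m ≤ Real.sqrt (1 - z + lam * (1 + z)) :=
      Real.sqrt_le_sqrt (q_ge h0 h1)
    have hrw : (1 - z) ^ (-(1/2) : ℝ) = (Real.sqrt (1 - z))⁻¹ := by
      rw [Real.rpow_neg h1z.le, Real.sqrt_eq_rpow]
    rw [hrw]
    have hden : Real.sqrt (1 - z) * Real.sqrt m ≤
        Real.sqrt (1 - z) * Real.sqrt (1 - z + lam * (1 + z)) := by
      exact mul_le_mul_of_nonneg_left hsq hs1.le
    calc z / (Real.sqrt (1 - z) * Real.sqrt (1 - z + lam * (1 + z)))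
        ≤ 1 / (Real.sqrt (1 - z) * Real.sqrt m) :=
          div_le_div₀ zero_le_one h1 (by positivity) hden
      _ = (Real.sqrt m)⁻¹ * (Real.sqrt (1 - z))⁻¹ := by
          rw [one_div, mul_inv, mul_comm]

lemma f_int {lam : ℝ} (hl : 0 < lam) :
    IntervalIntegrable
      (fun z => z / (Real.sqrt (1 - z) * Real.sqrt (1 - z + lam * (1 + z))))
      volume 0 1 := by
  set m := min (1 + lam) (2 * lam) with hmdef
  have hm : 0 < m := lt_min (by linarith) (by linarith)
  apply (majorant_int (Real.sqrt m)⁻¹).mono_fun'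
  · apply Measurable.aestronglyMeasurable
    apply Measurable.div measurable_id
    exact ((Real.continuous_sqrt.measurable.comp (by fun_prop)).mul
      (Real.continuous_sqrt.measurable.comp (by fun_prop)))
  · rw [Filter.EventuallyLE, ae_restrict_iff' measurableSet_uIoc]
    refine Filter.Eventually.of_forall fun z hz => ?_
    rw [Set.uIoc_of_le (by norm_num : (0:ℝ) ≤ 1)] at hz
    have h0 : 0 ≤ z := hz.1.le
    have h1 : z ≤ 1 := hz.2
    have hnn : 0 ≤ z / (Real.sqrt (1 - z) * Real.sqrt (1 - z + lam * (1 + z))) := by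
      positivity
    rw [Real.norm_of_nonneg hnn]
    exact pointwise_le hl h0 h1

lemma Iq_pos {lam : ℝ} (hl : 0 < lam) : 0 < Iq lam := by
  apply intervalIntegral.intervalIntegral_pos_of_pos_on (f_int hl)
  · intro z hz
    have h1z : 0 < 1 - z := by linarith [hz.2]
    have hq : 0 < 1 - z + lam * (1 + z) := by nlinarith [hz.1, hz.2]
    have := hz.1
    positivity
  · norm_num

lemma Iq_le {lam : ℝ} (hl : 0 < lam) :
    Iq lam ≤ 2 / Real.sqrt (min (1 + lam) (2 * lam)) := by
  set m := min (1 + lam) (2 * lam) with hmdef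
  have hm : 0 < m := lt_min (by linarith) (by linarith)
  have h := intervalIntegral.integral_mono_on (by norm_num : (0:ℝ) ≤ 1)
    (f_int hl) (majorant_int (Real.sqrt m)⁻¹)
    (fun z hz => pointwise_le hl hz.1 hz.2)
  rw [majorant_val] at h
  calc Iq lam ≤ (Real.sqrt m)⁻¹ * 2 := h
    _ = 2 / Real.sqrt m := by ring

end Stmt12Aux

open Stmt12Aux

theorem stmt_12 (g : ℝ → ℝ)
    (hg : ∀ lam, g lam = (lam / (1 + lam) ^ ((3:ℝ)/2)) *
      ∫ z in (0:ℝ)..1, z / (Real.sqrt (1 - z) * Real.sqrt (1 - z + lam * (1 + z)))) :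
    (∀ lam : ℝ, 0 < lam →
      0 < g lam ∧
      g lam ≤ 2 * lam / ((1 + lam) ^ ((3:ℝ)/2) * Real.sqrt (min (1 + lam) (2 * lam)))) ∧
    Filter.Tendsto g (nhdsWithin 0 (Set.Ioi 0)) (nhds 0) ∧
    Filter.Tendsto g Filter.atTop (nhds 0) := by
  have key : ∀ lam : ℝ, 0 < lam →
      0 < g lam ∧
      g lam ≤ 2 * lam / ((1 + lam) ^ ((3:ℝ)/2) * Real.sqrt (min (1 + lam) (2 * lam))) := by
    intro lam hl
    have h1l : (0:ℝ) < 1 + lam := by linarith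
    have hpow : 0 < (1 + lam) ^ ((3:ℝ)/2) := Real.rpow_pos_of_pos h1l _
    have hm : 0 < min (1 + lam) (2 * lam) := lt_min h1l (by linarith)
    have hsm : 0 < Real.sqrt (min (1 + lam) (2 * lam)) := Real.sqrt_pos.2 hm
    have hcoef : 0 < lam / (1 + lam) ^ ((3:ℝ)/2) := by positivity
    constructor
    · rw [hg lam]
      exact mul_pos hcoef (Iq_pos hl)
    · rw [hg lam]
      calc lam / (1 + lam) ^ ((3:ℝ)/2) * Iq lam
          ≤ lam / (1 + lam) ^ ((3:ℝ)/2) *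
            (2 / Real.sqrt (min (1 + lam) (2 * lam))) :=
            mul_le_mul_of_nonneg_left (Iq_le hl) hcoef.le
        _ = 2 * lam / ((1 + lam) ^ ((3:ℝ)/2) * Real.sqrt (min (1 + lam) (2 * lam))) := by
            field_simp
  refine ⟨key, ?_, ?_⟩
  · -- limit at 0⁺
    have hub : ∀ᶠ lam in nhdsWithin 0 (Set.Ioi 0), g lam ≤ Real.sqrt (2 * lam) := by
      have h1 : ∀ᶠ lam : ℝ in nhdsWithin 0 (Set.Ioi 0), lam < 1 :=
        Filter.Eventually.filter_mono nhdsWithin_le_nhds (eventually_lt_nhds (show (0:ℝ) < 1 by norm_num))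
      filter_upwards [h1, self_mem_nhdsWithin] with lam hlt hpos
      have hpos : (0:ℝ) < lam := hpos
      have hmin : min (1 + lam) (2 * lam) = 2 * lam :=
        min_eq_right (by linarith)
      have h1l : (0:ℝ) < 1 + lam := by linarith
      have hpow1 : (1:ℝ) ≤ (1 + lam) ^ ((3:ℝ)/2) :=
        Real.one_le_rpow (by linarith) (by norm_num)
      have hs2 : 0 < Real.sqrt (2 * lam) := Real.sqrt_pos.2 (by linarith)
      have := (key lam hpos).2
      rw [hmin] at this
      calc g lam ≤ 2 * lam / ((1 + lam) ^ ((3:ℝ)/2) * Real.sqrt (2 * lam)) := this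
        _ ≤ 2 * lam / (1 * Real.sqrt (2 * lam)) := by
            apply div_le_div_of_nonneg_left (by linarith) (by positivity)
            exact mul_le_mul_of_nonneg_right hpow1 hs2.le
        _ = Real.sqrt (2 * lam) := by rw [one_mul, Real.div_sqrt]
    have hlb : ∀ᶠ lam in nhdsWithin 0 (Set.Ioi 0), (0:ℝ) ≤ g lam := by
      filter_upwards [self_mem_nhdsWithin] with lam hpos
      exact (key lam hpos).1.le
    have hubt : Filter.Tendsto (fun lam : ℝ => Real.sqrt (2 * lam))
        (nhdsWithin 0 (Set.Ioi 0)) (nhds 0) := by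
      have : Filter.Tendsto (fun lam : ℝ => Real.sqrt (2 * lam)) (nhds 0) (nhds 0) := by
        have hc : Continuous (fun lam : ℝ => Real.sqrt (2 * lam)) := by fun_prop
        have := hc.tendsto 0
        simpa using this
      exact this.mono_left nhdsWithin_le_nhds
    exact tendsto_of_tendsto_of_tendsto_of_le_of_le' tendsto_const_nhds hubt hlb hub
  · -- limit at ∞
    have hub : ∀ᶠ lam in Filter.atTop, g lam ≤ 2 / lam := by
      filter_upwards [Filter.eventually_ge_atTop (1:ℝ)] with lam hge
      have hpos : (0:ℝ) < lam := by linarith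
      have h1l : (0:ℝ) < 1 + lam := by linarith
      have hmin : min (1 + lam) (2 * lam) = 1 + lam :=
        min_eq_left (by linarith)
      have hden : (1 + lam) ^ ((3:ℝ)/2) * Real.sqrt (1 + lam) = (1 + lam) ^ 2 := by
        rw [Real.sqrt_eq_rpow, ← Real.rpow_add h1l]
        norm_num
      have := (key lam hpos).2
      rw [hmin, hden] at this
      calc g lam ≤ 2 * lam / (1 + lam) ^ 2 := this
        _ ≤ 2 / lam := by
            rw [div_le_div_iff₀ (by positivity) hpos]
            nlinarith
    have hlb : ∀ᶠ lam in Filter.atTop, (0:ℝ) ≤ g lam := by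
      filter_upwards [Filter.eventually_gt_atTop (0:ℝ)] with lam hpos
      exact (key lam hpos).1.le
    have hubt : Filter.Tendsto (fun lam : ℝ => 2 / lam) Filter.atTop (nhds 0) :=
      tendsto_const_nhds.div_atTop Filter.tendsto_id
    exact tendsto_of_tendsto_of_tendsto_of_le_of_le' tendsto_const_nhds hubt hlb hub
end

section
/- Define g(λ) = λ(λ²-1)^{-3/2}(√(λ²-1) - arcsec(λ)) for λ > 1. Then g'(λ) = ((1+2λ²)arcsec(λ) - √(λ²-1)(2+λ²))/(λ²-1)^{5/2} < 0 for all λ > 1. -/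
/-!
With `u = √(λ² - 1) = tan (arcsec λ)` the sign claim becomes the rational upper bound
`arctan u < u (3 + u²) / (3 + 2u²)` for `u > 0`: the difference vanishes at `0` and has derivative
`u⁴ (1 + 2u²) / ((3 + 2u²)² (1 + u²)) > 0`. The derivative formula is a direct computation once
`(λ² - 1) ^ (k/2)` is written as `√(λ² - 1) ^ k`.
-/

open Real Set

lemma arccos_one_div_eq_arctan_sqrt {x : ℝ} (hx : 0 < x) :
    arccos (1 / x) = arctan √(x ^ 2 - 1) := by
  have h : 1 - (1 / x) ^ 2 = (x ^ 2 - 1) / x ^ 2 := by field_simp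
  rw [arccos_eq_arctan (by positivity), h, sqrt_div' _ (sq_nonneg x), sqrt_sq hx.le]
  field_simp

lemma hasDerivAt_mul_three_add_sq_div_sub_arctan (u : ℝ) :
    HasDerivAt (fun v : ℝ => v * (3 + v ^ 2) / (3 + 2 * v ^ 2) - arctan v)
      (u ^ 4 * (1 + 2 * u ^ 2) / ((3 + 2 * u ^ 2) ^ 2 * (1 + u ^ 2))) u := by
  have hnum : HasDerivAt (fun v : ℝ => v * (3 + v ^ 2)) (3 + 3 * u ^ 2) u :=
    ((hasDerivAt_id' u).mul ((hasDerivAt_pow 2 u).const_add 3)).congr_deriv (by norm_num; ring)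
  have hden : HasDerivAt (fun v : ℝ => 3 + 2 * v ^ 2) (4 * u) u :=
    (((hasDerivAt_pow 2 u).const_mul 2).const_add 3).congr_deriv (by norm_num; ring)
  refine ((hnum.div hden (by positivity)).sub (hasDerivAt_arctan u)).congr_deriv ?_
  field_simp
  ring

lemma arctan_lt_mul_three_add_sq_div {u : ℝ} (hu : 0 < u) :
    arctan u < u * (3 + u ^ 2) / (3 + 2 * u ^ 2) := by
  set f : ℝ → ℝ := fun v => v * (3 + v ^ 2) / (3 + 2 * v ^ 2) - arctan v
  have hf : StrictMonoOn f (Ici 0) := by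
    refine strictMonoOn_of_deriv_pos (convex_Ici 0) ?_ fun v hv => ?_
    · exact fun v _ =>
        (hasDerivAt_mul_three_add_sq_div_sub_arctan v).continuousAt.continuousWithinAt
    · rw [interior_Ici, mem_Ioi] at hv
      rw [(hasDerivAt_mul_three_add_sq_div_sub_arctan v).deriv]
      positivity
  have h := hf self_mem_Ici hu.le hu
  simp only [f, arctan_zero] at h
  linarith

lemma mul_arccos_one_div_lt {x : ℝ} (hx : 1 < x) :
    (1 + 2 * x ^ 2) * arccos (1 / x) < √(x ^ 2 - 1) * (2 + x ^ 2) := by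
  have hu2 : √(x ^ 2 - 1) ^ 2 = x ^ 2 - 1 := sq_sqrt (by nlinarith)
  have h := arctan_lt_mul_three_add_sq_div (sqrt_pos.2 (by nlinarith : 0 < x ^ 2 - 1))
  rw [hu2, lt_div_iff₀ (by nlinarith), ← arccos_one_div_eq_arctan_sqrt (by positivity)] at h
  linarith

lemma hasDerivAt_arccos_one_div {x : ℝ} (hx : 1 < x) :
    HasDerivAt (fun t : ℝ => arccos (1 / t)) (1 / (x * √(x ^ 2 - 1))) x := by
  have hx0 : 0 < x := by linarith
  have hinv : HasDerivAt (fun t : ℝ => 1 / t) (-(1 / x ^ 2)) x := by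
    simpa [one_div] using hasDerivAt_inv hx0.ne'
  have hlt : 1 / x < 1 := (div_lt_one hx0).2 hx
  have hpos : 0 < 1 / x := by positivity
  refine ((hasDerivAt_arccos (by linarith) hlt.ne).comp x hinv).congr_deriv ?_
  have h : 1 - (1 / x) ^ 2 = (x ^ 2 - 1) / x ^ 2 := by field_simp
  rw [h, sqrt_div' _ (sq_nonneg x), sqrt_sq hx0.le]
  field_simp

lemma rpow_neg_div_two_eq_inv_sqrt_pow {c : ℝ} (hc : 0 ≤ c) (n : ℕ) :
    c ^ (-(n : ℝ) / 2) = (√c ^ n)⁻¹ := by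
  rw [rpow_div_two_eq_sqrt _ hc, rpow_neg (sqrt_nonneg c), rpow_natCast]

noncomputable def endpointTime (t : ℝ) : ℝ :=
  t * (t ^ 2 - 1) ^ (-(3:ℝ)/2) * (√(t ^ 2 - 1) - arccos (1 / t))

lemma hasDerivAt_endpointTime {x : ℝ} (hx : 1 < x) :
    HasDerivAt endpointTime
      (((1 + 2 * x ^ 2) * arccos (1 / x) - √(x ^ 2 - 1) * (2 + x ^ 2)) / √(x ^ 2 - 1) ^ 5) x := by
  have hc : 0 < x ^ 2 - 1 := by nlinarith
  have hs2 : √(x ^ 2 - 1) ^ 2 = x ^ 2 - 1 := sq_sqrt hc.le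
  have hq : HasDerivAt (fun t : ℝ => t ^ 2 - 1) (2 * x) x :=
    ((hasDerivAt_pow 2 x).sub_const 1).congr_deriv (by norm_num)
  have h := ((hasDerivAt_id' x).mul (hq.rpow_const (p := -(3:ℝ)/2) (Or.inl hc.ne'))).mul
    ((hq.sqrt hc.ne').sub (hasDerivAt_arccos_one_div hx))
  refine h.congr_deriv ?_
  simp only [Pi.mul_apply, Pi.sub_apply]
  rw [show -(3:ℝ)/2 - 1 = -((5:ℕ):ℝ)/2 by norm_num, show -(3:ℝ)/2 = -((3:ℕ):ℝ)/2 by norm_num,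
    rpow_neg_div_two_eq_inv_sqrt_pow hc.le, rpow_neg_div_two_eq_inv_sqrt_pow hc.le]
  field_simp
  linear_combination (√(x ^ 2 - 1) - arccos (1 / x)) * hs2

theorem stmt_13 (lam : ℝ) (hlam : 1 < lam) :
    HasDerivAt
      (fun t : ℝ => t * (t ^ 2 - 1) ^ (-(3:ℝ)/2) *
        (Real.sqrt (t ^ 2 - 1) - Real.arccos (1 / t)))
      (((1 + 2 * lam ^ 2) * Real.arccos (1 / lam) -
        Real.sqrt (lam ^ 2 - 1) * (2 + lam ^ 2)) / (lam ^ 2 - 1) ^ ((5:ℝ)/2)) lam ∧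
    ((1 + 2 * lam ^ 2) * Real.arccos (1 / lam) -
        Real.sqrt (lam ^ 2 - 1) * (2 + lam ^ 2)) / (lam ^ 2 - 1) ^ ((5:ℝ)/2) < 0 := by
  have hc : 0 < lam ^ 2 - 1 := by nlinarith
  have h5 : (lam ^ 2 - 1) ^ ((5:ℝ)/2) = √(lam ^ 2 - 1) ^ 5 := by
    rw [rpow_div_two_eq_sqrt _ hc.le]; exact_mod_cast rpow_natCast _ 5
  rw [h5]
  refine ⟨hasDerivAt_endpointTime hlam, div_neg_of_neg_of_pos ?_ ?_⟩
  · linarith [mul_arccos_one_div_lt hlam]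
  · exact pow_pos (sqrt_pos.2 hc) 5
end

section
/- Let g'(λ) = ((1+2λ²)arcsec(λ) - √(λ²-1)(2+λ²))/(λ²-1)^{5/2} for λ > 1. Then lim_{λ→1⁺} g'(λ) = -1/15. -/
/-!
Put `t = √(λ² - 1)`. Then `λ² = 1 + t²`, `arcsec λ = arctan t` and `(λ² - 1)^{5/2} = t⁵`, so the
quotient becomes `((3 + 2t²) arctan t - t (3 + t²)) / t⁵` with `t → 0⁺`. The partial sums of the
Maclaurin series of `arctan` alternately lie above and below it on `[0, ∞)`, since the derivative
of the error is `±x²ⁿ / (1 + x²)`, and the bounds of degree 5 and 7 squeeze the quotient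
between `-1/15 - t²/35 - 2t⁴/7` and `-1/15 + 2t²/5`.
-/

open Filter Finset Topology

namespace Real

noncomputable def arctanTaylor (n : ℕ) (x : ℝ) : ℝ :=
  ∑ k ∈ range n, (-1) ^ k * x ^ (2 * k + 1) / (2 * k + 1)

theorem hasDerivAt_arctanTaylor (n : ℕ) (x : ℝ) :
    HasDerivAt (arctanTaylor n) ((1 - (-x ^ 2) ^ n) / (1 + x ^ 2)) x := by
  have hsum : HasDerivAt (arctanTaylor n) (∑ k ∈ range n, (-x ^ 2) ^ k) x := by
    unfold arctanTaylor
    refine HasDerivAt.fun_sum fun k _ => ?_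
    refine (((hasDerivAt_pow (2 * k + 1) x).const_mul ((-1 : ℝ) ^ k)).div_const
      (2 * k + 1 : ℝ)).congr_deriv ?_
    push_cast
    field_simp
    ring
  have hne : -x ^ 2 ≠ 1 := by nlinarith [sq_nonneg x]
  refine hsum.congr_deriv ?_
  rw [geom_sum_eq hne]
  have : 1 + x ^ 2 ≠ 0 := by positivity
  field_simp
  ring

theorem neg_one_pow_mul_arctan_sub_arctanTaylor_nonneg (n : ℕ) {x : ℝ} (hx : 0 ≤ x) :
    0 ≤ (-1) ^ n * (arctan x - arctanTaylor n x) := by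
  have hderiv (y : ℝ) : HasDerivAt (fun y => (-1) ^ n * (arctan y - arctanTaylor n y))
      ((y ^ n) ^ 2 / (1 + y ^ 2)) y := by
    refine (((hasDerivAt_arctan y).sub (hasDerivAt_arctanTaylor n y)).const_mul
      ((-1 : ℝ) ^ n)).congr_deriv ?_
    have hsign : ((-1 : ℝ) ^ n) ^ 2 = 1 := by rw [← pow_mul, pow_mul']; simp
    rw [neg_pow (y ^ 2)]
    field_simp
    linear_combination (y ^ n) ^ 2 * hsign
  have hmono := monotone_of_hasDerivAt_nonneg hderiv fun y => by positivity
  simpa [arctanTaylor] using hmono hx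

theorem arctan_le_taylor_five {x : ℝ} (hx : 0 ≤ x) :
    arctan x ≤ x - x ^ 3 / 3 + x ^ 5 / 5 := by
  have h := neg_one_pow_mul_arctan_sub_arctanTaylor_nonneg 3 hx
  simp only [arctanTaylor, sum_range_succ, sum_range_zero] at h
  norm_num at h
  linarith

theorem taylor_seven_le_arctan {x : ℝ} (hx : 0 ≤ x) :
    x - x ^ 3 / 3 + x ^ 5 / 5 - x ^ 7 / 7 ≤ arctan x := by
  have h := neg_one_pow_mul_arctan_sub_arctanTaylor_nonneg 4 hx
  simp only [arctanTaylor, sum_range_succ, sum_range_zero] at h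
  norm_num at h
  linarith

theorem arccos_one_div_eq_arctan_sqrt {x : ℝ} (hx : 1 ≤ x) :
    arccos (1 / x) = arctan √(x ^ 2 - 1) := by
  rw [arctan_eq_arccos (sqrt_nonneg _), sq_sqrt (by nlinarith), add_sub_cancel,
    sqrt_sq (by linarith), one_div]

theorem rpow_natCast_div_two {x : ℝ} (hx : 0 ≤ x) (n : ℕ) : x ^ ((n : ℝ) / 2) = √x ^ n := by
  rw [div_eq_inv_mul, rpow_mul_natCast hx, sqrt_eq_rpow, one_div]

end Real

open Real

theorem tendsto_arctan_combination_div_pow_five :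
    Tendsto (fun t : ℝ => ((3 + 2 * t ^ 2) * arctan t - t * (3 + t ^ 2)) / t ^ 5)
      (𝓝[>] 0) (𝓝 (-1 / 15)) := by
  have hlower : Tendsto (fun t : ℝ => -1 / 15 - t ^ 2 / 35 - 2 * t ^ 4 / 7) (𝓝[>] 0)
      (𝓝 (-1 / 15)) :=
    tendsto_nhdsWithin_of_tendsto_nhds (Continuous.tendsto' (by fun_prop) 0 _ (by norm_num))
  have hupper : Tendsto (fun t : ℝ => -1 / 15 + 2 * t ^ 2 / 5) (𝓝[>] 0) (𝓝 (-1 / 15)) :=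
    tendsto_nhdsWithin_of_tendsto_nhds (Continuous.tendsto' (by fun_prop) 0 _ (by norm_num))
  refine tendsto_of_tendsto_of_tendsto_of_le_of_le' hlower hupper ?_ ?_
  · filter_upwards [self_mem_nhdsWithin] with t (ht : 0 < t)
    rw [le_div_iff₀ (by positivity)]
    have h := mul_le_mul_of_nonneg_left (taylor_seven_le_arctan ht.le)
      (by positivity : (0 : ℝ) ≤ 3 + 2 * t ^ 2)
    linear_combination h
  · filter_upwards [self_mem_nhdsWithin] with t (ht : 0 < t)
    rw [div_le_iff₀ (by positivity)]
    have h := mul_le_mul_of_nonneg_left (arctan_le_taylor_five ht.le)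
      (by positivity : (0 : ℝ) ≤ 3 + 2 * t ^ 2)
    linear_combination h

theorem tendsto_sqrt_sq_sub_one_nhdsGT :
    Tendsto (fun x : ℝ => √(x ^ 2 - 1)) (𝓝[>] 1) (𝓝[>] 0) := by
  refine tendsto_nhdsWithin_of_tendsto_nhds_of_eventually_within _
    (tendsto_nhdsWithin_of_tendsto_nhds (Continuous.tendsto' (by fun_prop) 1 0 (by norm_num))) ?_
  filter_upwards [self_mem_nhdsWithin] with x (hx : 1 < x)
  exact sqrt_pos.mpr (by nlinarith)

theorem stmt_14 :
    Filter.Tendsto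
      (fun lam : ℝ => ((1 + 2 * lam ^ 2) * Real.arccos (1 / lam) -
        Real.sqrt (lam ^ 2 - 1) * (2 + lam ^ 2)) / (lam ^ 2 - 1) ^ ((5:ℝ)/2))
      (nhdsWithin 1 (Set.Ioi 1)) (nhds (-1 / 15)) := by
  refine (tendsto_arctan_combination_div_pow_five.comp tendsto_sqrt_sq_sub_one_nhdsGT).congr' ?_
  filter_upwards [self_mem_nhdsWithin] with lam (hlam : 1 < lam)
  have hsq : √(lam ^ 2 - 1) ^ 2 = lam ^ 2 - 1 := sq_sqrt (by nlinarith)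
  have hpow : (lam ^ 2 - 1) ^ ((5 : ℝ) / 2) = √(lam ^ 2 - 1) ^ 5 := by
    exact_mod_cast rpow_natCast_div_two (by nlinarith) 5
  rw [Function.comp_apply, arccos_one_div_eq_arctan_sqrt hlam.le, hpow, hsq]
  ring
end

section
/- Let g'(λ) = ((1+2λ²)arcsec(λ) - √(λ²-1)(2+λ²))/(λ²-1)^{5/2} for λ > 1. Then g'(λ) = -1/λ² + O(λ⁻³) as λ → +∞; in particular λ² g'(λ) → -1 as λ → +∞. -/
open Real Filter Asymptotics

lemma stmt_15_key (lam : ℝ) (h : 2 ≤ lam) :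
    |((1 + 2 * lam ^ 2) * Real.arccos (1 / lam) -
        Real.sqrt (lam ^ 2 - 1) * (2 + lam ^ 2)) / (lam ^ 2 - 1) ^ ((5:ℝ)/2) + 1 / lam ^ 2|
      ≤ 512 / lam ^ 3 := by
  have hl : (0:ℝ) < lam := by linarith
  have hx0 : (0:ℝ) < lam ^ 2 - 1 := by nlinarith
  set s := Real.sqrt (lam ^ 2 - 1) with hs
  have hs2 : s ^ 2 = lam ^ 2 - 1 := Real.sq_sqrt hx0.le
  have hs0 : 0 < s := Real.sqrt_pos.2 hx0
  have hsl : s ≤ lam := by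
    rw [hs]
    calc Real.sqrt (lam^2-1) ≤ Real.sqrt (lam^2) := Real.sqrt_le_sqrt (by linarith)
    _ = lam := by rw [Real.sqrt_sq hl.le]
  have hsg : lam / 2 ≤ s := by nlinarith [hs2, hs0]
  have hA0 : 0 ≤ Real.arccos (1/lam) := Real.arccos_nonneg _
  have hA4 : Real.arccos (1/lam) ≤ 4 :=
    le_trans (Real.arccos_le_pi _) (by linarith [Real.pi_le_four])
  set A := Real.arccos (1/lam) with hA
  have hr : (lam ^ 2 - 1) ^ ((5:ℝ)/2) = (lam^2-1)^2 * s := by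
    rw [hs, Real.sqrt_eq_rpow, ← Real.rpow_natCast (lam^2-1) 2, ← Real.rpow_add hx0]
    norm_num
  rw [hr]
  have hE : ((1 + 2 * lam ^ 2) * A - s * (2 + lam ^ 2)) / ((lam^2-1)^2 * s) + 1 / lam ^ 2
      = ((2*lam^4 + lam^2) * A + (1 - 4*lam^2) * s) / (lam^2 * ((lam^2-1)^2 * s)) := by
    field_simp
    ring
  rw [hE, abs_div]
  have hDpos : 0 < lam^2 * ((lam^2-1)^2 * s) := by positivity
  rw [abs_of_pos hDpos]
  have hnum : |(2*lam^4 + lam^2) * A + (1 - 4*lam^2) * s| ≤ 16 * lam^4 := by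
    rw [abs_le]
    constructor
    · nlinarith [mul_nonneg (show (0:ℝ) ≤ 2*lam^4+lam^2 by nlinarith) hA0,
        mul_le_mul_of_nonneg_left hsl (show (0:ℝ) ≤ 4*lam^2-1 by nlinarith)]
    · nlinarith [mul_le_mul_of_nonneg_left hA4 (show (0:ℝ) ≤ 2*lam^4+lam^2 by nlinarith),
        mul_nonneg (show (0:ℝ) ≤ 4*lam^2-1 by nlinarith) hs0.le]
  have h1 : lam^4/4 ≤ (lam^2-1)^2 := by nlinarith [mul_nonneg (show (0:ℝ) ≤ lam^2/2 - 1 by nlinarith) (show (0:ℝ) ≤ 3*lam^2/2 - 1 by nlinarith)]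
  have h2 : (lam^4/4)*(lam/2) ≤ (lam^2-1)^2 * s :=
    mul_le_mul h1 hsg (by positivity) (by positivity)
  have hD : lam^7/8 ≤ lam^2 * ((lam^2-1)^2 * s) :=
    calc lam^7/8 = lam^2 * ((lam^4/4)*(lam/2)) := by ring
      _ ≤ lam^2 * ((lam^2-1)^2 * s) :=
          mul_le_mul_of_nonneg_left h2 (by positivity)
  calc |(2*lam^4 + lam^2) * A + (1 - 4*lam^2) * s| / (lam^2 * ((lam^2-1)^2 * s))
      ≤ (16*lam^4) / (lam^7/8) := div_le_div₀ (by positivity) hnum (by positivity) hD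
    _ = 128 / lam^3 := by field_simp; ring
    _ ≤ 512 / lam^3 := by gcongr <;> norm_num

theorem stmt_15 (g' : ℝ → ℝ)
    (hg' : ∀ lam, g' lam = ((1 + 2 * lam ^ 2) * Real.arccos (1 / lam) -
        Real.sqrt (lam ^ 2 - 1) * (2 + lam ^ 2)) / (lam ^ 2 - 1) ^ ((5:ℝ)/2)) :
    (fun lam : ℝ => g' lam + 1 / lam ^ 2) =O[Filter.atTop] (fun lam : ℝ => 1 / lam ^ 3) ∧
    Filter.Tendsto (fun lam : ℝ => lam ^ 2 * g' lam) Filter.atTop (nhds (-1)) := by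
  have key : ∀ lam : ℝ, 2 ≤ lam → |g' lam + 1 / lam ^ 2| ≤ 512 / lam ^ 3 := by
    intro lam h
    rw [hg' lam]
    exact stmt_15_key lam h
  constructor
  · rw [Asymptotics.isBigO_iff]
    refine ⟨512, ?_⟩
    filter_upwards [Filter.eventually_ge_atTop (2:ℝ)] with lam h
    have hl : (0:ℝ) < lam := by linarith
    rw [Real.norm_eq_abs, Real.norm_eq_abs]
    calc |g' lam + 1/lam^2| ≤ 512 / lam^3 := key lam h
      _ = 512 * |1/lam^3| := by
          rw [abs_of_pos (show (0:ℝ) < 1/lam^3 by positivity)]; ring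
  · have hz : Tendsto (fun lam : ℝ => lam^2 * g' lam + 1) atTop (nhds 0) := by
      refine squeeze_zero_norm' (a := fun lam : ℝ => 512 / lam) ?_ ?_
      · filter_upwards [Filter.eventually_ge_atTop (2:ℝ)] with lam h
        have hl : (0:ℝ) < lam := by linarith
        have h1 : lam^2 * g' lam + 1 = lam^2 * (g' lam + 1/lam^2) := by
          field_simp
        rw [Real.norm_eq_abs, h1, abs_mul, abs_of_pos (show (0:ℝ) < lam^2 by positivity)]
        calc lam^2 * |g' lam + 1/lam^2| ≤ lam^2 * (512/lam^3) := by
              exact mul_le_mul_of_nonneg_left (key lam h) (by positivity)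
          _ = 512 / lam := by field_simp
      · exact tendsto_const_nhds.div_atTop tendsto_id
    have h2 : Tendsto (fun lam : ℝ => (lam^2 * g' lam + 1) - 1) atTop (nhds (0 - 1)) :=
      hz.sub tendsto_const_nhds
    simpa using h2
end

section
/- For λ > 1, the integral ∫₀¹ (3λ(z-1) - (z-1)² - λ²(z²-2z+3) + λ³(z²+z-1)) / (λ√(1+λ)·√(1-z)·(1-z+λ(1+z))^{3/2}) dz equals (1+λ²-2λ⁴+6λ²√(λ²-1)·arctan(√((λ-1)/(1+λ))))/(λ(1+λ)(λ-1)³), and this quantity is negative. -/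
/-!
With `v z = √((λ - 1)(1 - z) / (1 - z + λ(1 + z)))` one has `1 + v² = 2λ / (1 - z + λ(1 + z))`,
which makes the integrand the derivative of the elementary function
`F z = -(v z · P z / λ + 6λ · arctan (v z)) / ((λ - 1)² √(λ² - 1))` on `(0, 1)`, with `P` linear
in `z`. `F` is continuous on `[0, 1]` and the integrand is `(1 - z)^(-1/2)` times a continuous
function, so the fundamental theorem of calculus gives the integral as `F 1 - F 0`, where
`F 1 = 0` and `v 0 = √((λ - 1) / (1 + λ))`.

For the sign, the fifth Taylor polynomial of `arctan` at `0` bounds it from above on `[0, ∞)`;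
substituting it bounds the numerator by `-(λ - 1)³ (30λ³ + 72λ² + 75λ + 15) / (15 (1 + λ)²)`.
-/

open Real Set MeasureTheory intervalIntegral

theorem Real.arctan_le_taylor_five_s16 {x : ℝ} (hx : 0 ≤ x) :
    arctan x ≤ x - x ^ 3 / 3 + x ^ 5 / 5 := by
  have hderiv (t : ℝ) : HasDerivAt (fun t => t - t ^ 3 / 3 + t ^ 5 / 5 - arctan t)
      (t ^ 6 / (1 + t ^ 2)) t := by
    refine ((((hasDerivAt_id t).sub ((hasDerivAt_pow 3 t).div_const 3)).add
      ((hasDerivAt_pow 5 t).div_const 5)).sub (hasDerivAt_arctan t)).congr_deriv ?_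
    field_simp
    ring
  have hmono := monotone_of_hasDerivAt_nonneg hderiv fun t => by positivity
  simpa using hmono hx

theorem intervalIntegrable_div_sqrt_sub {g : ℝ → ℝ} {a b : ℝ} (hab : a ≤ b)
    (hg : ContinuousOn g (Icc a b)) :
    IntervalIntegrable (fun z => g z / √(b - z)) volume a b := by
  have hpow : IntervalIntegrable (fun z => (b - z) ^ (-(1 / 2) : ℝ)) volume a b := by
    simpa using ((intervalIntegral.intervalIntegrable_rpow' (a := 0) (b := b - a)
      (by norm_num : (-1 : ℝ) < -(1 / 2))).comp_sub_left b).symm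
  refine (hpow.continuousOn_mul (by rwa [uIcc_of_le hab])).congr fun z hz => ?_
  rw [uIoc_of_le hab] at hz
  rw [rpow_neg (sub_nonneg.2 hz.2), ← sqrt_eq_rpow, div_eq_mul_inv, mul_comm]

namespace TimeMapDeriv

noncomputable def arctanArg (lam z : ℝ) : ℝ :=
  √((lam - 1) * (1 - z) / (1 - z + lam * (1 + z)))

def linearPart (lam z : ℝ) : ℝ :=
  (lam - 1) * (lam ^ 3 - lam ^ 2 - 1) * z - (lam + 1) * (2 * lam ^ 2 + 1)

def numerator (lam z : ℝ) : ℝ :=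
  3 * lam * (z - 1) - (z - 1) ^ 2 - lam ^ 2 * (z ^ 2 - 2 * z + 3) + lam ^ 3 * (z ^ 2 + z - 1)

noncomputable def integrand (lam z : ℝ) : ℝ :=
  numerator lam z /
    (lam * √(1 + lam) * √(1 - z) * (1 - z + lam * (1 + z)) ^ ((3:ℝ) / 2))

noncomputable def closedForm (lam : ℝ) : ℝ :=
  (1 + lam ^ 2 - 2 * lam ^ 4 + 6 * lam ^ 2 * √(lam ^ 2 - 1) * arctan √((lam - 1) / (1 + lam))) /
    (lam * (1 + lam) * (lam - 1) ^ 3)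

noncomputable def antideriv (lam z : ℝ) : ℝ :=
  -(arctanArg lam z * linearPart lam z / lam + 6 * lam * arctan (arctanArg lam z)) /
    ((lam - 1) ^ 2 * √(lam ^ 2 - 1))

variable {lam z : ℝ}

theorem one_sub_add_mul_pos (hlam : 0 < lam) (hz0 : 0 ≤ z) (hz1 : z ≤ 1) :
    0 < 1 - z + lam * (1 + z) := by
  nlinarith

theorem sq_arctanArg (hlam : 1 < lam) (hz0 : 0 ≤ z) (hz1 : z ≤ 1) :
    arctanArg lam z ^ 2 = (lam - 1) * (1 - z) / (1 - z + lam * (1 + z)) :=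
  sq_sqrt <| div_nonneg (mul_nonneg (by linarith) (by linarith))
    (one_sub_add_mul_pos (by linarith) hz0 hz1).le

theorem arctanArg_pos (hlam : 1 < lam) (hz0 : 0 ≤ z) (hz1 : z < 1) : 0 < arctanArg lam z :=
  sqrt_pos.2 <| div_pos (mul_pos (by linarith) (by linarith))
    (one_sub_add_mul_pos (by linarith) hz0 hz1.le)

theorem hasDerivAt_arctanArg (hlam : 1 < lam) (hz0 : 0 ≤ z) (hz1 : z < 1) :
    HasDerivAt (arctanArg lam)
      (-(lam * (lam - 1)) / ((1 - z + lam * (1 + z)) ^ 2 * arctanArg lam z)) z := by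
  have hD := one_sub_add_mul_pos (by linarith : 0 < lam) hz0 hz1.le
  have hnum : HasDerivAt (fun z => (lam - 1) * (1 - z)) (-(lam - 1)) z :=
    (((hasDerivAt_id' z).const_sub 1).const_mul (lam - 1)).congr_deriv (by ring)
  have hden : HasDerivAt (fun z => 1 - z + lam * (1 + z)) (lam - 1) z :=
    (((hasDerivAt_id' z).const_sub 1).add
      (((hasDerivAt_id' z).const_add 1).const_mul lam)).congr_deriv (by ring)
  have hg := hnum.fun_div hden hD.ne'
  have hg0 : (lam - 1) * (1 - z) / (1 - z + lam * (1 + z)) ≠ 0 :=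
    (div_pos (mul_pos (by linarith) (by linarith)) hD).ne'
  have hv := (arctanArg_pos hlam hz0 hz1).ne'
  refine (hg.sqrt hg0).congr_deriv ?_
  rw [arctanArg] at hv ⊢
  field_simp
  ring

theorem hasDerivAt_antideriv (hlam : 1 < lam) (hz0 : 0 ≤ z) (hz1 : z < 1) :
    HasDerivAt (antideriv lam)
      ((lam - 1) * numerator lam z /
        (lam * (1 - z + lam * (1 + z)) ^ 2 * √(lam ^ 2 - 1) * arctanArg lam z)) z := by
  have hv := hasDerivAt_arctanArg hlam hz0 hz1
  have hP : HasDerivAt (linearPart lam) ((lam - 1) * (lam ^ 3 - lam ^ 2 - 1)) z :=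
    (((hasDerivAt_id' z).const_mul _).sub_const _).congr_deriv (mul_one _)
  refine ((((hv.fun_mul hP).div_const lam).fun_add (hv.arctan.const_mul (6 * lam))).neg.div_const
    _).congr_deriv ?_
  have hv0 := (arctanArg_pos hlam hz0 hz1).ne'
  have hv2 := sq_arctanArg hlam hz0 hz1.le
  have hD := (one_sub_add_mul_pos (by linarith : 0 < lam) hz0 hz1.le).ne'
  have hc : √(lam ^ 2 - 1) ≠ 0 := (sqrt_pos.2 (by nlinarith)).ne'
  have hl0 : lam ≠ 0 := by positivity
  have hl1 : lam - 1 ≠ 0 := by linarith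
  have h1v : 1 + arctanArg lam z ^ 2 = 2 * lam / (1 - z + lam * (1 + z)) := by
    rw [hv2]
    field_simp
    ring
  rw [h1v]
  field_simp
  rw [hv2]
  unfold linearPart numerator
  field_simp
  ring

theorem sqrt_mul_arctanArg (hlam : 1 < lam) (hz0 : 0 ≤ z) (hz1 : z ≤ 1) :
    √(lam ^ 2 - 1) * arctanArg lam z =
      (lam - 1) * √(1 + lam) * √(1 - z) / √(1 - z + lam * (1 + z)) := by
  have hD := one_sub_add_mul_pos (by linarith : 0 < lam) hz0 hz1
  have hl1 : 0 ≤ lam - 1 := by linarith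
  rw [← pow_left_inj₀ (by unfold arctanArg; positivity) (by positivity) two_ne_zero, mul_pow,
    sq_arctanArg hlam hz0 hz1, div_pow, mul_pow, mul_pow, sq_sqrt (by nlinarith),
    sq_sqrt (by linarith), sq_sqrt (by linarith), sq_sqrt hD.le]
  field_simp
  ring

theorem hasDerivAt_antideriv_eq_integrand (hlam : 1 < lam) (hz : z ∈ Ioo 0 1) :
    HasDerivAt (antideriv lam) (integrand lam z) z := by
  obtain ⟨hz0, hz1⟩ := hz
  have hD := one_sub_add_mul_pos (by linarith : 0 < lam) hz0.le hz1.le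
  have hpow : (1 - z + lam * (1 + z)) ^ ((3:ℝ) / 2) =
      (1 - z + lam * (1 + z)) * √(1 - z + lam * (1 + z)) := by
    rw [show (3:ℝ) / 2 = 1 + 1 / 2 by norm_num, rpow_add hD, rpow_one, ← sqrt_eq_rpow]
  convert hasDerivAt_antideriv hlam hz0.le hz1 using 1
  rw [integrand, hpow, mul_assoc _ (√(lam ^ 2 - 1)), sqrt_mul_arctanArg hlam hz0.le hz1.le]
  have : 0 < √(1 - z) := sqrt_pos.2 (by linarith)
  have : 0 < √(1 - z + lam * (1 + z)) := sqrt_pos.2 hD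
  have : lam - 1 ≠ 0 := by linarith
  have : lam ≠ 0 := by positivity
  field_simp
  rw [sq_sqrt hD.le]

theorem continuousOn_antideriv (hlam : 1 < lam) : ContinuousOn (antideriv lam) (Icc 0 1) := by
  have hv : ContinuousOn (arctanArg lam) (Icc 0 1) := by
    refine ContinuousOn.sqrt (ContinuousOn.div (by fun_prop) (by fun_prop) fun z hz => ?_)
    exact (one_sub_add_mul_pos (by linarith) hz.1 hz.2).ne'
  unfold antideriv linearPart
  fun_prop

theorem antideriv_one : antideriv lam 1 = 0 := by
  simp [antideriv, arctanArg]

theorem antideriv_zero (hlam : 1 < lam) : antideriv lam 0 = -closedForm lam := by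
  have hv : arctanArg lam 0 = √((lam - 1) / (1 + lam)) := by simp [arctanArg]
  have hcv := sqrt_mul_arctanArg hlam le_rfl zero_le_one
  have hc2 : √(lam ^ 2 - 1) ^ 2 = lam ^ 2 - 1 := sq_sqrt (by nlinarith)
  have he : √(1 + lam) ≠ 0 := (sqrt_pos.2 (by linarith)).ne'
  have hc : √(lam ^ 2 - 1) ≠ 0 := (sqrt_pos.2 (by nlinarith)).ne'
  simp only [sub_zero, add_zero, mul_one, sqrt_one, mul_div_cancel_right₀ _ he] at hcv
  have hv0 : arctanArg lam 0 = (lam - 1) / √(lam ^ 2 - 1) := by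
    rw [eq_div_iff hc, mul_comm, hcv]
  rw [antideriv, closedForm, linearPart, ← hv]
  generalize arctan (arctanArg lam 0) = A
  rw [hv0]
  have : lam - 1 ≠ 0 := by linarith
  have : 1 + lam ≠ 0 := by linarith
  have : lam ≠ 0 := by positivity
  field_simp
  linear_combination (1 + lam ^ 2 - 2 * lam ^ 4 + 6 * lam ^ 2 * √(lam ^ 2 - 1) * A) * hc2

theorem closedForm_numerator_neg (hlam : 1 < lam) :
    1 + lam ^ 2 - 2 * lam ^ 4 + 6 * lam ^ 2 * √(lam ^ 2 - 1) *
      arctan (√((lam - 1) / (1 + lam))) < 0 := by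
  set y := √((lam - 1) / (1 + lam))
  have hy2 : y ^ 2 = (lam - 1) / (1 + lam) := sq_sqrt (div_nonneg (by linarith) (by linarith))
  have hsqrt : √(lam ^ 2 - 1) = (1 + lam) * y := by
    rw [← sqrt_sq (by positivity : 0 ≤ (1 + lam) * y), mul_pow, hy2]
    congr 1
    field_simp
    ring
  have hbound := mul_le_mul_of_nonneg_left (arctan_le_taylor_five_s16 (x := y) (sqrt_nonneg _))
    (by positivity : 0 ≤ 6 * lam ^ 2 * ((1 + lam) * y))
  have hpoly : 1 + lam ^ 2 - 2 * lam ^ 4 +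
      6 * lam ^ 2 * ((1 + lam) * y) * (y - y ^ 3 / 3 + y ^ 5 / 5) =
      -((lam - 1) ^ 3 * (30 * lam ^ 3 + 72 * lam ^ 2 + 75 * lam + 15) / (15 * (1 + lam) ^ 2)) := by
    have : 1 + lam ≠ 0 := by linarith
    rw [show 6 * lam ^ 2 * ((1 + lam) * y) * (y - y ^ 3 / 3 + y ^ 5 / 5) =
      6 * lam ^ 2 * (1 + lam) * (y ^ 2 - (y ^ 2) ^ 2 / 3 + (y ^ 2) ^ 3 / 5) by ring, hy2]
    field_simp
    ring
  have hl1 : 0 < lam - 1 := by linarith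
  have hpos : 0 < (lam - 1) ^ 3 * (30 * lam ^ 3 + 72 * lam ^ 2 + 75 * lam + 15) /
      (15 * (1 + lam) ^ 2) := by positivity
  rw [hsqrt]
  linarith

theorem closedForm_neg (hlam : 1 < lam) : closedForm lam < 0 := by
  have : 0 < lam - 1 := by linarith
  exact div_neg_of_neg_of_pos (closedForm_numerator_neg hlam) (by positivity)

theorem intervalIntegrable_integrand (hlam : 1 < lam) :
    IntervalIntegrable (integrand lam) volume 0 1 := by
  have hg : ContinuousOn (fun z => numerator lam z /
      (lam * √(1 + lam) * (1 - z + lam * (1 + z)) ^ ((3:ℝ) / 2))) (Icc 0 1) := by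
    have hD : Continuous fun z : ℝ => 1 - z + lam * (1 + z) := by fun_prop
    refine ContinuousOn.div (by unfold numerator; fun_prop)
      (continuousOn_const.mul (hD.continuousOn.rpow_const fun _ _ => Or.inr (by norm_num)))
      fun z hz => ?_
    have := one_sub_add_mul_pos (by linarith : 0 < lam) hz.1 hz.2
    have : 0 < √(1 + lam) := sqrt_pos.2 (by linarith)
    have : 0 < lam := by linarith
    positivity
  refine (intervalIntegrable_div_sqrt_sub zero_le_one hg).congr fun z _ => ?_
  simp only [integrand]
  ring

end TimeMapDeriv

theorem stmt_16 (lam : ℝ) (hlam : 1 < lam) :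
    (∫ z in (0:ℝ)..1,
        (3 * lam * (z - 1) - (z - 1) ^ 2 - lam ^ 2 * (z ^ 2 - 2 * z + 3) +
          lam ^ 3 * (z ^ 2 + z - 1)) /
        (lam * Real.sqrt (1 + lam) * Real.sqrt (1 - z) *
          (1 - z + lam * (1 + z)) ^ ((3:ℝ)/2))) =
      (1 + lam ^ 2 - 2 * lam ^ 4 + 6 * lam ^ 2 * Real.sqrt (lam ^ 2 - 1) *
        Real.arctan (Real.sqrt ((lam - 1) / (1 + lam)))) /
        (lam * (1 + lam) * (lam - 1) ^ 3) ∧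
    (1 + lam ^ 2 - 2 * lam ^ 4 + 6 * lam ^ 2 * Real.sqrt (lam ^ 2 - 1) *
        Real.arctan (Real.sqrt ((lam - 1) / (1 + lam)))) /
        (lam * (1 + lam) * (lam - 1) ^ 3) < 0 := by
  open TimeMapDeriv in
  show ∫ z in (0:ℝ)..1, integrand lam z = closedForm lam ∧ closedForm lam < 0
  refine ⟨?_, closedForm_neg hlam⟩
  rw [integral_eq_sub_of_hasDerivAt_of_le zero_le_one (continuousOn_antideriv hlam)
    (fun z hz => hasDerivAt_antideriv_eq_integrand hlam hz) (intervalIntegrable_integrand hlam),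
    antideriv_one, antideriv_zero hlam, zero_sub, neg_neg]
end
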